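/- arXiv:math/0611559 — 5 statements merged into one kernel-verified Lean document; each statement's English description precedes it below -/
import Mathlib

section
/- Let a ∈ ℝ and b > 0, and let λ₁ < 0 < λ₂ be the two roots of λ² + aλ − b = 0. Let 0 < T ≤ ∞ and let y : [0,T) → ℝ be a C² function satisfying y''(t) + a y'(t) − b y(t) ≥ 0 for all t ∈ [0,T). Then for all t ∈ [0,T): (i) y(t) ≥ e^{λ₁ t} y(0) + ((e^{λ₂ t} − e^{λ₁ t})/(λ₂ − λ₁))·(y'(0) − λ₁ y(0)), and (ii) y'(t) ≥ λ₂ y(t) + e^{λ₁ t}(y'(0) − λ₂ y(0)). In particular, if ((a + √(a²+4b))/2)·y(0) + y'(0) > 0 (equivalently y'(0) − λ₁ y(0) > 0), then both y(t) and y'(t) grow at least like a positive constant times e^{λ₂ t} for large t. -/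
open Real Set ENNReal

set_option maxHeartbeats 1000000 in
/-- Lemma 2.3: exponential growth for the ODE inequality `y'' + ay' - by ≥ 0`
on the interval `[0,T)`, where `0 < T ≤ ∞` (`T : ℝ≥0∞`). -/
theorem ode_exponential_growth
    (a b : ℝ) (hb : 0 < b)
    (lam₁ lam₂ : ℝ)
    (hroot₁ : lam₁ ^ 2 + a * lam₁ - b = 0)
    (hroot₂ : lam₂ ^ 2 + a * lam₂ - b = 0)
    (hlam₁ : lam₁ < 0) (hlam₂ : 0 < lam₂)
    (T : ℝ≥0∞) (hT : 0 < T)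
    (S : Set ℝ) (hS : S = {t : ℝ | 0 ≤ t ∧ ENNReal.ofReal t < T})
    (y : ℝ → ℝ) (hy : ContDiffOn ℝ 2 y S)
    (hineq : ∀ t ∈ S,
      derivWithin (derivWithin y S) S t + a * derivWithin y S t - b * y t ≥ 0) :
    -- (i)
    (∀ t ∈ S, y t ≥ Real.exp (lam₁ * t) * y 0
        + (Real.exp (lam₂ * t) - Real.exp (lam₁ * t)) / (lam₂ - lam₁)
          * (derivWithin y S 0 - lam₁ * y 0)) ∧
    -- (ii)
    (∀ t ∈ S, derivWithin y S t ≥ lam₂ * y t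
        + Real.exp (lam₁ * t) * (derivWithin y S 0 - lam₂ * y 0)) ∧
    -- in particular : under the positivity condition on the initial data, both `y`
    -- and `y'` grow at least like a positive constant times `e^{λ₂ t}` for large `t`
    ((a + Real.sqrt (a ^ 2 + 4 * b)) / 2 * y 0 + derivWithin y S 0 > 0 →
      ∃ c > (0 : ℝ), ∃ t₀ : ℝ, ∀ t ∈ S, t₀ ≤ t →
        c * Real.exp (lam₂ * t) ≤ y t ∧ c * Real.exp (lam₂ * t) ≤ derivWithin y S t) := by
  -- Shape of the set `S`
  have hshape : S = Ici (0:ℝ) ∨ ∃ c : ℝ, 0 < c ∧ S = Ico 0 c := by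
    by_cases hne : T = ⊤
    · left; rw [hS]; ext t; simp [hne]
    · right
      refine ⟨T.toReal, ENNReal.toReal_pos hT.ne' hne, ?_⟩
      rw [hS]; ext t
      simp only [mem_setOf_eq, mem_Ico]
      exact and_congr_right fun h1 => ENNReal.ofReal_lt_iff_lt_toReal h1 hne
  have hconv : Convex ℝ S := by
    rcases hshape with h | ⟨c, _, h⟩ <;> rw [h]
    exacts [convex_Ici 0, convex_Ico 0 c]
  have hUD : UniqueDiffOn ℝ S := by
    rcases hshape with h | ⟨c, _, h⟩ <;> rw [h]
    exacts [uniqueDiffOn_Ici 0, uniqueDiffOn_Ico 0 c]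
  have h0S : (0:ℝ) ∈ S := by
    rw [hS]; exact ⟨le_refl 0, by simpa using hT⟩
  have h0le : ∀ t ∈ S, 0 ≤ t := by
    intro t ht; rw [hS] at ht; exact ht.1
  -- derivatives
  set y1 := derivWithin y S with hy1def
  set y2 := derivWithin y1 S with hy2def
  have hdy : ∀ t ∈ S, HasDerivWithinAt y (y1 t) S t := fun t ht =>
    ((hy.differentiableOn (by norm_num)) t ht).hasDerivWithinAt
  have hy1cd : ContDiffOn ℝ 1 y1 S := hy.derivWithin hUD (by norm_num)
  have hdy1 : ∀ t ∈ S, HasDerivWithinAt y1 (y2 t) S t := fun t ht =>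
    ((hy1cd.differentiableOn (by norm_num)) t ht).hasDerivWithinAt
  have hyc : ContinuousOn y S := hy.continuousOn
  have hy1c : ContinuousOn y1 S := hy1cd.continuousOn
  -- root relations
  have hlt : lam₁ < lam₂ := hlam₁.trans hlam₂
  have hsum : lam₁ + lam₂ = -a := by
    have h : (lam₁ - lam₂) * (lam₁ + lam₂ + a) = 0 := by linear_combination hroot₁ - hroot₂
    rcases mul_eq_zero.1 h with h' | h'
    · exact absurd h' (sub_ne_zero.2 hlt.ne)
    · linarith
  have hprod : lam₁ * lam₂ = -b := by
    have : lam₁ * (lam₁ + lam₂) = lam₁ * (-a) := by rw [hsum]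
    nlinarith [hroot₁]
  -- generic monotonicity helper
  have key : ∀ (f f' : ℝ → ℝ), ContinuousOn f S →
      (∀ t ∈ S, HasDerivWithinAt f (f' t) S t) →
      (∀ t ∈ S, 0 ≤ f' t) → ∀ t ∈ S, f 0 ≤ f t := by
    intro f f' hc hd hpos t ht
    have hm := monotoneOn_of_hasDerivWithinAt_nonneg hconv hc
      (fun x hx => (hd x (interior_subset hx)).mono interior_subset)
      (fun x hx => hpos x (interior_subset hx))
    exact hm h0S ht (h0le t ht)
  have hexpd : ∀ (μ t : ℝ), HasDerivWithinAt (fun s : ℝ => Real.exp (μ * s))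
      (μ * Real.exp (μ * t)) S t := by
    intro μ t
    have h := ((hasDerivAt_id t).const_mul μ).exp
    simpa [mul_comm] using h.hasDerivWithinAt
  -- factorization identity
  have hfactor : ∀ (μ ν E Y Y1 Y2 : ℝ), μ + ν = -a → μ * ν = -b →
      (-ν * E) * (Y1 - μ * Y) + E * (Y2 - μ * Y1) = E * (Y2 + a * Y1 - b * Y) := by
    intro μ ν E Y Y1 Y2 h1 h2
    linear_combination (-(E * Y1)) * h1 + (E * Y) * h2
  have hd0 : (0:ℝ) < lam₂ - lam₁ := by linarith
  -- the two first-order bounds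
  have hmono : ∀ (μ ν : ℝ), μ + ν = -a → μ * ν = -b → ∀ t ∈ S,
      y1 0 - μ * y 0 ≤ Real.exp (-ν * t) * (y1 t - μ * y t) := by
    intro μ ν h1 h2 t ht
    have := key (fun s => Real.exp (-ν * s) * (y1 s - μ * y s))
      (fun s => (-ν * Real.exp (-ν * s)) * (y1 s - μ * y s)
        + Real.exp (-ν * s) * (y2 s - μ * y1 s))
      (by
        apply ContinuousOn.mul
        · exact (Real.continuous_exp.comp (continuous_const.mul continuous_id)).continuousOn
        · exact hy1c.sub (continuousOn_const.mul hyc))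
      (by
        intro s hs
        exact (hexpd (-ν) s).mul ((hdy1 s hs).sub ((hdy s hs).const_mul μ)))
      (by
        intro s hs
        rw [hfactor μ ν _ _ _ _ h1 h2]
        exact mul_nonneg (Real.exp_pos _).le (hineq s hs))
      t ht
    simpa using this
  set u0 : ℝ := y1 0 - lam₁ * y 0 with hu0def
  set v0 : ℝ := y1 0 - lam₂ * y 0 with hv0def
  have hu : ∀ t ∈ S, Real.exp (lam₂ * t) * u0 ≤ y1 t - lam₁ * y t := by
    intro t ht
    rw [hu0def]
    have h := hmono lam₁ lam₂ hsum hprod t ht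
    have hE : Real.exp (-lam₂ * t) * Real.exp (lam₂ * t) = 1 := by
      rw [← Real.exp_add]; ring_nf; exact Real.exp_zero
    have h2 := mul_le_mul_of_nonneg_left h (Real.exp_pos (lam₂ * t)).le
    have e1 : Real.exp (lam₂ * t) * (Real.exp (-lam₂ * t) * (y1 t - lam₁ * y t))
        = y1 t - lam₁ * y t := by
      rw [← mul_assoc, mul_comm (Real.exp (lam₂ * t)), hE, one_mul]
    linarith [h2, e1.le, e1.ge]
  have hv : ∀ t ∈ S, Real.exp (lam₁ * t) * v0 ≤ y1 t - lam₂ * y t := by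
    intro t ht
    rw [hv0def]
    have h := hmono lam₂ lam₁ (by linarith) (by linarith [hprod]) t ht
    have hE : Real.exp (-lam₁ * t) * Real.exp (lam₁ * t) = 1 := by
      rw [← Real.exp_add]; ring_nf; exact Real.exp_zero
    have h2 := mul_le_mul_of_nonneg_left h (Real.exp_pos (lam₁ * t)).le
    have e1 : Real.exp (lam₁ * t) * (Real.exp (-lam₁ * t) * (y1 t - lam₂ * y t))
        = y1 t - lam₂ * y t := by
      rw [← mul_assoc, mul_comm (Real.exp (lam₁ * t)), hE, one_mul]
    linarith [h2, e1.le, e1.ge]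
  -- (ii)
  have part2 : ∀ t ∈ S, y1 t ≥ lam₂ * y t + Real.exp (lam₁ * t) * v0 := by
    intro t ht; have := hv t ht; linarith
  -- (i): integrate the `u` bound (multiplied through by `lam₂ - lam₁ > 0`)
  have part1 : ∀ t ∈ S, y t ≥ Real.exp (lam₁ * t) * y 0
      + (Real.exp (lam₂ * t) - Real.exp (lam₁ * t)) / (lam₂ - lam₁) * u0 := by
    intro t ht
    have hw := key
      (fun s => Real.exp (-lam₁ * s) * y s * (lam₂ - lam₁)
        - (Real.exp ((lam₂ - lam₁) * s) - 1) * u0)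
      (fun s => ((-lam₁ * Real.exp (-lam₁ * s)) * y s + Real.exp (-lam₁ * s) * y1 s)
          * (lam₂ - lam₁)
        - ((lam₂ - lam₁) * Real.exp ((lam₂ - lam₁) * s)) * u0)
      (by
        apply ContinuousOn.sub
        · exact ((Real.continuous_exp.comp
            (continuous_const.mul continuous_id)).continuousOn.mul hyc).mul continuousOn_const
        · exact (((Real.continuous_exp.comp
            (continuous_const.mul continuous_id)).sub continuous_const).mul
            continuous_const).continuousOn)
      (by
        intro s hs
        exact (((hexpd (-lam₁) s).mul (hdy s hs)).mul_const _).sub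
          (((hexpd (lam₂ - lam₁) s).sub_const 1).mul_const u0)
      )
      (by
        intro s hs
        have hu' := hu s hs
        have hEE : Real.exp (-lam₁ * s) * Real.exp (lam₂ * s)
            = Real.exp ((lam₂ - lam₁) * s) := by
          rw [← Real.exp_add]; ring_nf
        have h5 := mul_le_mul_of_nonneg_left
          (mul_le_mul_of_nonneg_left hu' (Real.exp_pos (-lam₁ * s)).le) hd0.le
        have e3 : (lam₂ - lam₁) * (Real.exp (-lam₁ * s) * (Real.exp (lam₂ * s) * u0))
            = (lam₂ - lam₁) * (Real.exp ((lam₂ - lam₁) * s) * u0) := by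
          rw [← mul_assoc (Real.exp (-lam₁ * s)), hEE]
        nlinarith [h5, e3])
      t ht
    simp only [mul_zero, Real.exp_zero, one_mul, sub_self, zero_mul, sub_zero] at hw
    -- hw : y 0 * (lam₂-lam₁) ≤ exp(-lam₁ t) * y t * (lam₂-lam₁) - (exp((lam₂-lam₁)t)-1)*u0
    have hE1 : Real.exp (lam₁ * t) * Real.exp (-lam₁ * t) = 1 := by
      rw [← Real.exp_add]; ring_nf; exact Real.exp_zero
    have hE2 : Real.exp (lam₁ * t) * Real.exp ((lam₂ - lam₁) * t) = Real.exp (lam₂ * t) := by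
      rw [← Real.exp_add]; ring_nf
    rw [ge_iff_le, ← sub_nonneg]
    have hrw : y t - (Real.exp (lam₁ * t) * y 0
        + (Real.exp (lam₂ * t) - Real.exp (lam₁ * t)) / (lam₂ - lam₁) * u0)
        = (y t * (lam₂ - lam₁) - (Real.exp (lam₁ * t) * y 0 * (lam₂ - lam₁)
          + (Real.exp (lam₂ * t) - Real.exp (lam₁ * t)) * u0)) / (lam₂ - lam₁) := by
      field_simp
    rw [hrw]
    apply div_nonneg _ hd0.le
    have hwmul := mul_le_mul_of_nonneg_left hw (Real.exp_pos (lam₁ * t)).le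
    have e1 : Real.exp (lam₁ * t) * (Real.exp (-lam₁ * t) * y t * (lam₂ - lam₁))
        = y t * (lam₂ - lam₁) := by
      rw [show Real.exp (lam₁ * t) * (Real.exp (-lam₁ * t) * y t * (lam₂ - lam₁))
        = Real.exp (lam₁ * t) * Real.exp (-lam₁ * t) * (y t * (lam₂ - lam₁)) from by ring,
        hE1, one_mul]
    have e2 : Real.exp (lam₁ * t) * (Real.exp ((lam₂ - lam₁) * t) * u0)
        = Real.exp (lam₂ * t) * u0 := by
      rw [← mul_assoc, hE2]
    nlinarith [hwmul, e1, e2]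
  refine ⟨part1, part2, ?_⟩
  -- part (iii)
  intro hpos
  have hsq : Real.sqrt (a ^ 2 + 4 * b) = lam₂ - lam₁ := by
    have h : a ^ 2 + 4 * b = (lam₂ - lam₁) ^ 2 := by nlinarith [hsum, hprod]
    rw [h, Real.sqrt_sq hd0.le]
  rw [hsq] at hpos
  have haeq : (a + (lam₂ - lam₁)) / 2 = -lam₁ := by linarith
  rw [haeq] at hpos
  have hu0pos : 0 < u0 := by rw [hu0def]; nlinarith [hpos]
  set c₀ : ℝ := u0 / (2 * (lam₂ - lam₁)) with hc₀def
  have hc₀pos : 0 < c₀ := div_pos hu0pos (by linarith)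
  have hu0eq : u0 = 2 * (lam₂ - lam₁) * c₀ := by
    rw [hc₀def]; field_simp
  set M₁ : ℝ := max 0 (2 * c₀ - y 0) with hM₁def
  set M₂ : ℝ := max 0 (-v0) with hM₂def
  set c : ℝ := min c₀ (lam₂ * c₀ / 2) with hcdef
  have hcpos : 0 < c := lt_min hc₀pos (by positivity)
  set R : ℝ := max 1 (max (M₁ / c₀) (2 * M₂ / (lam₂ * c₀))) with hRdef
  have hR1 : 1 ≤ R := le_max_left _ _
  refine ⟨c, hcpos, Real.log R / lam₂, ?_⟩
  intro t ht ht₀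
  have htnn : 0 ≤ t := h0le t ht
  have hexpR : R ≤ Real.exp (lam₂ * t) := by
    calc R = Real.exp (Real.log R) := (Real.exp_log (by linarith)).symm
    _ ≤ Real.exp (lam₂ * t) := by
        apply Real.exp_le_exp.2
        rw [div_le_iff₀ hlam₂] at ht₀
        linarith [ht₀]
  have hE2pos : 0 < Real.exp (lam₂ * t) := Real.exp_pos _
  have hE1pos : 0 < Real.exp (lam₁ * t) := Real.exp_pos _
  have hE1le : Real.exp (lam₁ * t) ≤ 1 := by
    rw [Real.exp_le_one_iff]; nlinarith
  -- bound M₁ : c₀ * E2 ≥ M₁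
  have hM₁bd : M₁ ≤ c₀ * Real.exp (lam₂ * t) := by
    have h1 : M₁ / c₀ ≤ R := le_trans (le_max_left _ _) (le_max_right _ _)
    rw [div_le_iff₀ hc₀pos] at h1
    nlinarith
  have hM₂bd : M₂ ≤ lam₂ * c₀ / 2 * Real.exp (lam₂ * t) := by
    have h1 : 2 * M₂ / (lam₂ * c₀) ≤ R := le_trans (le_max_right _ _) (le_max_right _ _)
    rw [div_le_iff₀ (by positivity)] at h1
    nlinarith [mul_le_mul_of_nonneg_right hexpR (by positivity : (0:ℝ) ≤ lam₂ * c₀)]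
  -- y bound
  have hy_bd : c₀ * Real.exp (lam₂ * t) ≤ y t := by
    have h1 := part1 t ht
    have hdiv : (Real.exp (lam₂ * t) - Real.exp (lam₁ * t)) / (lam₂ - lam₁) * u0
        = (Real.exp (lam₂ * t) - Real.exp (lam₁ * t)) * (2 * c₀) := by
      rw [hu0eq]; field_simp
    rw [hdiv] at h1
    -- E1 * (2c₀ - y 0) ≤ M₁
    have h2 : Real.exp (lam₁ * t) * (2 * c₀ - y 0) ≤ M₁ := by
      have hM : 2 * c₀ - y 0 ≤ M₁ := le_max_right _ _
      have hM0 : 0 ≤ M₁ := le_max_left _ _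
      nlinarith
    nlinarith
  have hy'_bd : c * Real.exp (lam₂ * t) ≤ y1 t := by
    have h1 := part2 t ht
    have h2 : -M₂ ≤ Real.exp (lam₁ * t) * v0 := by
      have hM : -v0 ≤ M₂ := le_max_right _ _
      have hM0 : 0 ≤ M₂ := le_max_left _ _
      nlinarith
    have hc2 : c ≤ lam₂ * c₀ / 2 := min_le_right _ _
    nlinarith
  exact ⟨le_trans (by nlinarith [min_le_left c₀ (lam₂ * c₀ / 2)]) hy_bd, hy'_bd⟩
end

section
/- Let a ∈ ℝ, b > 0, p > 1 and T₁ ∈ ℝ. There is no C² function y : [T₁, ∞) → ℝ such that y(t) ≥ 0 for all t ≥ T₁, y(T₁) > 0, y'(T₁) > 0, and y''(t) + a y'(t) ≥ b·y(t)^p for all t ≥ T₁. -/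
/-!
The integrating factor `exp (a t)` shows that `y'` stays positive, so `y` increases. With
`q = (p + 1) / 2`, a barrier argument gives `y' ≥ ε y ^ q` for small `ε > 0`: where `y'` would
touch `ε y ^ q`, the inequality pushes `y''` above the barrier's derivative `ε² q y ^ p`, the
term `a y'` being absorbed because `y ^ p ≥ y(T₁) ^ (q - 1) y ^ q`. Then `y ^ (1 - q)` stays
positive while decreasing at least linearly, which is absurd.
-/

open Real Set Filter Topology

section

variable {y y' y'' : ℝ → ℝ} {T : ℝ}

theorem pos_of_deriv_add_mul_nonneg {a : ℝ}
    (hy : ∀ t ∈ Ici T, HasDerivWithinAt y (y' t) (Ici T) t)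
    (hode : ∀ t ∈ Ici T, 0 ≤ y' t + a * y t) (hT : 0 < y T) :
    ∀ t ∈ Ici T, 0 < y t := by
  have hderiv : ∀ t ∈ Ici T, HasDerivWithinAt (fun t => exp (a * t) * y t)
      (exp (a * t) * (y' t + a * y t)) (Ici T) t := fun t ht =>
    (((hasDerivAt_id' t).const_mul a).exp.hasDerivWithinAt.mul (hy t ht)).congr_deriv (by ring)
  have hmono : MonotoneOn (fun t => exp (a * t) * y t) (Ici T) :=
    monotoneOn_of_hasDerivWithinAt_nonneg (convex_Ici T)
      (HasDerivWithinAt.continuousOn hderiv)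
      (fun t ht => (hderiv t (interior_subset ht)).mono interior_subset)
      (fun t ht => mul_nonneg (exp_pos _).le (hode t (interior_subset ht)))
  intro t ht
  have h := hmono self_mem_Ici ht ht
  exact pos_of_mul_pos_right ((mul_pos (exp_pos _) hT).trans_le h) (exp_pos _).le

theorem false_of_mul_rpow_le_deriv {ε q : ℝ} (hε : 0 < ε) (hq : 1 < q)
    (hy : ∀ t ∈ Ici T, HasDerivWithinAt y (y' t) (Ici T) t) (hpos : ∀ t ∈ Ici T, 0 < y t)
    (hineq : ∀ t ∈ Ici T, ε * y t ^ q ≤ y' t) : False := by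
  set δ := ε * (q - 1)
  have hδ : 0 < δ := mul_pos hε (sub_pos.2 hq)
  have hderiv : ∀ t ∈ Ici T, HasDerivWithinAt (fun t => y t ^ (1 - q) + δ * t)
      (y' t * (1 - q) * y t ^ (1 - q - 1) + δ) (Ici T) t := fun t ht =>
    ((hy t ht).rpow_const (Or.inl (hpos t ht).ne')).add
      (((hasDerivAt_id' t).const_mul δ).hasDerivWithinAt.congr_deriv (mul_one δ))
  have hanti : AntitoneOn (fun t => y t ^ (1 - q) + δ * t) (Ici T) := by
    refine antitoneOn_of_hasDerivWithinAt_nonpos (convex_Ici T)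
      (HasDerivWithinAt.continuousOn hderiv)
      (fun t ht => (hderiv t (interior_subset ht)).mono interior_subset) fun t ht => ?_
    have ht := interior_subset ht
    have hcancel : y t ^ q * y t ^ (1 - q - 1) = 1 := by
      rw [← rpow_add (hpos t ht)]; norm_num
    have := mul_le_mul_of_nonneg_right (hineq t ht) (rpow_pos_of_pos (hpos t ht) (1 - q - 1)).le
    rw [mul_assoc, hcancel] at this
    linarith [mul_le_mul_of_nonneg_left this (sub_pos.2 hq).le]
  set t := T + y T ^ (1 - q) / δ
  have ht : t ∈ Ici T :=
    le_add_of_nonneg_right (div_pos (rpow_pos_of_pos (hpos T self_mem_Ici) _) hδ).le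
  have hδt : δ * t = δ * T + y T ^ (1 - q) := by rw [mul_add, mul_div_cancel₀ _ hδ.ne']
  have h : y t ^ (1 - q) + δ * t ≤ y T ^ (1 - q) + δ * T := hanti self_mem_Ici ht ht
  linarith [rpow_pos_of_pos (hpos t ht) (1 - q)]

theorem exists_mul_rpow_le_deriv {a b p : ℝ} (hb : 0 < b) (hp : 1 < p)
    (hy : ∀ t ∈ Ici T, HasDerivWithinAt y (y' t) (Ici T) t)
    (hy' : ∀ t ∈ Ici T, HasDerivWithinAt y' (y'' t) (Ici T) t)
    (hmono : ∀ t ∈ Ici T, y T ≤ y t) (hyT : 0 < y T) (hy'T : 0 < y' T)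
    (hode : ∀ t ∈ Ici T, b * y t ^ p ≤ y'' t + a * y' t) :
    ∃ ε > 0, ∀ t ∈ Ici T, ε * y t ^ ((p + 1) / 2) ≤ y' t := by
  set q := (p + 1) / 2 with hq
  set r := (p - 1) / 2 with hr
  have hpos : ∀ s ∈ Ici T, 0 < y s := fun s hs => hyT.trans_le (hmono s hs)
  have hm : 0 < y T ^ r := rpow_pos_of_pos hyT r
  have hsmall : ∀ᶠ ε in 𝓝 (0 : ℝ),
      ε * y T ^ q < y' T ∧ |a| * ε < (b - ε ^ 2 * q) * y T ^ r :=
    (ContinuousAt.eventually_lt (by fun_prop) (by fun_prop) (by simpa using hy'T)).and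
      (ContinuousAt.eventually_lt (by fun_prop) (by fun_prop) (by simpa using mul_pos hb hm))
  obtain ⟨ε, hε, hεT, hεa⟩ :=
    (eventually_mem_nhdsWithin.and (hsmall.filter_mono (nhdsWithin_le_nhds (s := Ioi 0)))).exists
  have hderiv : ∀ s ∈ Ici T, HasDerivWithinAt (fun s => ε * y s ^ q)
      (ε * (y' s * q * y s ^ (q - 1))) (Ici T) s := fun s hs =>
    ((hy s hs).rpow_const (Or.inl (hpos s hs).ne')).const_mul ε
  have htouch :
      ∀ s ∈ Ici T, ε * y s ^ q = y' s → ε * (y' s * q * y s ^ (q - 1)) < y'' s := by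
    intro s hs heq
    have hYq : 0 < y s ^ q := rpow_pos_of_pos (hpos s hs) q
    have hp_eq : y s ^ p = y s ^ q * y s ^ (q - 1) := by
      rw [← rpow_add (hpos s hs), hq]; ring_nf
    have hp_eq' : y s ^ p = y s ^ r * y s ^ q := by
      rw [← rpow_add (hpos s hs), hq, hr]; ring_nf
    have hcoef : 0 < b - ε ^ 2 * q :=
      pos_of_mul_pos_left ((mul_nonneg (abs_nonneg a) hε.le).trans_lt hεa) hm.le
    have hkey : a * ε < (b - ε ^ 2 * q) * y s ^ r :=
      calc a * ε ≤ |a| * ε := mul_le_mul_of_nonneg_right (le_abs_self a) hε.le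
        _ < (b - ε ^ 2 * q) * y T ^ r := hεa
        _ ≤ (b - ε ^ 2 * q) * y s ^ r :=
          mul_le_mul_of_nonneg_left
            (rpow_le_rpow hyT.le (hmono s hs) (by rw [hr]; linarith)) hcoef.le
    calc ε * (y' s * q * y s ^ (q - 1)) = ε ^ 2 * q * y s ^ p := by rw [← heq, hp_eq]; ring
      _ < b * y s ^ p - a * y' s := by
        rw [← heq, hp_eq']; linarith [mul_lt_mul_of_pos_right hkey hYq]
      _ ≤ y'' s := by linarith [hode s hs]
  refine ⟨ε, hε, fun t ht => image_le_of_deriv_right_lt_deriv_boundary'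
    ((HasDerivWithinAt.continuousOn hderiv).mono Icc_subset_Ici_self)
    (fun s hs => (hderiv s hs.1).mono (Ici_subset_Ici.2 hs.1)) hεT.le
    ((HasDerivWithinAt.continuousOn hy').mono Icc_subset_Ici_self)
    (fun s hs => (hy' s hs.1).mono (Ici_subset_Ici.2 hs.1)) (fun s hs => htouch s hs.1)
    ⟨ht, le_rfl⟩⟩

end

/-- Lemma 2.4: a non-negative C² solution of `y'' + ay' ≥ b·y^p` with positive value
and positive derivative at the initial time cannot exist on all of `[T₁,∞)`. -/
theorem ode_blowup
    (a b p T₁ : ℝ) (hb : 0 < b) (hp : 1 < p) :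
    ¬ ∃ y : ℝ → ℝ,
      ContDiffOn ℝ 2 y (Ici T₁) ∧
      (∀ t ≥ T₁, 0 ≤ y t) ∧
      0 < y T₁ ∧
      0 < derivWithin y (Ici T₁) T₁ ∧
      (∀ t ≥ T₁,
        derivWithin (derivWithin y (Ici T₁)) (Ici T₁) t
          + a * derivWithin y (Ici T₁) t ≥ b * y t ^ p) := by
  rintro ⟨y, hy, hnonneg, hyT, hy'T, hode⟩
  set y' := derivWithin y (Ici T₁)
  have hderiv : ∀ t ∈ Ici T₁, HasDerivWithinAt y (y' t) (Ici T₁) t := fun t ht =>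
    (hy.differentiableOn two_ne_zero t ht).hasDerivWithinAt
  have hderiv' : ∀ t ∈ Ici T₁, HasDerivWithinAt y' (derivWithin y' (Ici T₁) t) (Ici T₁) t :=
    fun t ht => ((hy.derivWithin (uniqueDiffOn_Ici T₁) (by norm_num)).differentiableOn
      one_ne_zero t ht).hasDerivWithinAt
  have hy'pos : ∀ t ∈ Ici T₁, 0 < y' t := pos_of_deriv_add_mul_nonneg hderiv'
    (fun t ht => (mul_nonneg hb.le (rpow_nonneg (hnonneg t ht) p)).trans (hode t ht)) hy'T
  have hmono : ∀ t ∈ Ici T₁, y T₁ ≤ y t := fun t ht =>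
    monotoneOn_of_hasDerivWithinAt_nonneg (convex_Ici T₁)
      (HasDerivWithinAt.continuousOn hderiv)
      (fun s hs => (hderiv s (interior_subset hs)).mono interior_subset)
      (fun s hs => (hy'pos s (interior_subset hs)).le) self_mem_Ici ht ht
  obtain ⟨ε, hε, hbarrier⟩ :=
    exists_mul_rpow_le_deriv hb hp hderiv hderiv' hmono hyT hy'T hode
  exact false_of_mul_rpow_le_deriv hε (by linarith) hderiv
    (fun t ht => hyT.trans_le (hmono t ht)) hbarrier
end

section
/- Let λ > 0 and y ∈ ℝ². Define φ(x) = log(32λ²·(4 + λ²|x−y|²)^{−2}) and ζ(x) = (4 + λ²|x−y|²)^{−2} for x ∈ ℝ². Then ∫_{ℝ²} |∇ζ(x)|² dx − ∫_{ℝ²} e^{φ(x)}·ζ(x)² dx = −π/320. -/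
/-!
Both integrands are radial about `y`: with `w = 4 + l²|x - y|²` one has `|∇ζ|² = 16 l⁴ |x - y|² w⁻⁶`
and `e^φ ζ² = 32 l² w⁻⁶`. Polar coordinates turn each integral into `2π ∫₀^∞ r (⋯) dr`, and writing
`l² r² = w - 4` reduces everything to `∫₀^∞ r (a + b r²)^{-(n+2)} dr = 1 / (2b(n+1)a^(n+1))`,
which has an elementary antiderivative. The two energies are `2π/640` and `2π/320`.
-/

open MeasureTheory Real Filter Set

lemma hasGradientAt_comp_norm_sub_sq {E : Type*} [NormedAddCommGroup E] [InnerProductSpace ℝ E]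
    [CompleteSpace E] {g : ℝ → ℝ} {g' : ℝ} {x y : E} (hg : HasDerivAt g g' (‖x - y‖ ^ 2)) :
    HasGradientAt (fun z => g (‖z - y‖ ^ 2)) ((2 * g') • (x - y)) x := by
  rw [hasGradientAt_iff_hasFDerivAt]
  refine (hg.comp_hasFDerivAt x ((hasFDerivAt_id x).sub_const y).norm_sq).congr_fderiv ?_
  ext v
  simp only [id_eq, map_sub, ContinuousLinearMap.comp_id, smul_apply,
    sub_apply, coe_innerSL_apply, nsmul_eq_mul, Nat.cast_ofNat, smul_eq_mul,
    map_smul, InnerProductSpace.toDual_apply_apply]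
  ring

lemma norm_gradient_inv_sq_quadratic_sq {E : Type*} [NormedAddCommGroup E]
    [InnerProductSpace ℝ E] [CompleteSpace E] {a b : ℝ} (ha : 0 < a) (hb : 0 ≤ b) (y x : E) :
    ‖gradient (fun z => ((a + b * ‖z - y‖ ^ 2) ^ 2)⁻¹) x‖ ^ 2
      = 16 * b ^ 2 * ‖x - y‖ ^ 2 * ((a + b * ‖x - y‖ ^ 2) ^ 6)⁻¹ := by
  have hw : a + b * ‖x - y‖ ^ 2 ≠ 0 := by positivity
  have hg := ((((hasDerivAt_id' (‖x - y‖ ^ 2)).const_mul b).const_add a).fun_pow 2).fun_inv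
    (pow_ne_zero 2 hw)
  rw [(hasGradientAt_comp_norm_sub_sq hg).gradient, norm_smul, mul_pow, Real.norm_eq_abs, sq_abs]
  field_simp
  ring

lemma integral_comp_norm_sub_euclideanSpace_fin_two (f : ℝ → ℝ) (y : EuclideanSpace ℝ (Fin 2)) :
    ∫ x : EuclideanSpace ℝ (Fin 2), f ‖x - y‖ = 2 * π * ∫ r in Ioi (0 : ℝ), r * f r := by
  rw [integral_sub_right_eq_self (fun x => f ‖x‖) y, integral_fun_norm_addHaar volume f,
    finrank_euclideanSpace_fin, measureReal_def, EuclideanSpace.volume_ball]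
  norm_num [Real.sq_sqrt Real.pi_nonneg, Real.Gamma_two, ENNReal.toReal_ofReal Real.pi_nonneg]
  ring

section QuadraticWeight

variable {a b : ℝ} (n : ℕ)

lemma hasDerivAt_inv_pow_quadratic (ha : 0 < a) (hb : 0 < b) (r : ℝ) :
    HasDerivAt (fun r => -((a + b * r ^ 2) ^ (n + 1))⁻¹ / (2 * b * (n + 1)))
      (r * ((a + b * r ^ 2) ^ (n + 2))⁻¹) r := by
  have hw : a + b * r ^ 2 ≠ 0 := by positivity
  have h := (((((hasDerivAt_pow 2 r).const_mul b).const_add a).fun_pow (n + 1)).fun_inv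
    (pow_ne_zero _ hw)).neg.div_const (2 * b * (n + 1))
  refine h.congr_deriv ?_
  field_simp
  push_cast
  ring

lemma tendsto_inv_pow_quadratic_atTop (hb : 0 < b) :
    Tendsto (fun r => -((a + b * r ^ 2) ^ (n + 1))⁻¹ / (2 * b * (n + 1))) atTop (nhds 0) := by
  have hw : Tendsto (fun r : ℝ => a + b * r ^ 2) atTop atTop :=
    tendsto_atTop_add_const_left _ a ((tendsto_pow_atTop two_ne_zero).const_mul_atTop hb)
  simpa using ((tendsto_inv_atTop_zero.comp
    ((tendsto_pow_atTop n.succ_ne_zero).comp hw)).neg).div_const (2 * b * (n + 1))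

lemma integrableOn_Ioi_mul_inv_pow_quadratic (ha : 0 < a) (hb : 0 < b) :
    IntegrableOn (fun r => r * ((a + b * r ^ 2) ^ (n + 2))⁻¹) (Ioi 0) :=
  integrableOn_Ioi_deriv_of_nonneg' (fun r _ => hasDerivAt_inv_pow_quadratic n ha hb r)
    (fun r hr => mul_nonneg (le_of_lt hr) (by positivity)) (tendsto_inv_pow_quadratic_atTop n hb)

lemma integral_Ioi_mul_inv_pow_quadratic (ha : 0 < a) (hb : 0 < b) :
    ∫ r in Ioi (0 : ℝ), r * ((a + b * r ^ 2) ^ (n + 2))⁻¹ = 1 / (2 * b * (n + 1) * a ^ (n + 1)) := by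
  rw [integral_Ioi_of_hasDerivAt_of_nonneg' (fun r _ => hasDerivAt_inv_pow_quadratic n ha hb r)
    (fun r hr => mul_nonneg (le_of_lt hr) (by positivity)) (tendsto_inv_pow_quadratic_atTop n hb)]
  field_simp
  ring

end QuadraticWeight

lemma integral_Ioi_gradient_profile {b : ℝ} (hb : 0 < b) :
    ∫ r in Ioi (0 : ℝ), r * (16 * b ^ 2 * r ^ 2 * ((4 + b * r ^ 2) ^ 6)⁻¹) = 1 / 640 := by
  -- `b r² = (4 + b r²) - 4` splits the integrand into two integrable pieces
  have hsplit : ∀ r : ℝ, r * (16 * b ^ 2 * r ^ 2 * ((4 + b * r ^ 2) ^ 6)⁻¹)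
      = 16 * b * (r * ((4 + b * r ^ 2) ^ (3 + 2))⁻¹)
        - 64 * b * (r * ((4 + b * r ^ 2) ^ (4 + 2))⁻¹) := by
    intro r
    have : 4 + b * r ^ 2 ≠ 0 := by positivity
    field_simp
    ring
  simp_rw [hsplit]
  rw [integral_sub ((integrableOn_Ioi_mul_inv_pow_quadratic 3 four_pos hb).const_mul _)
    ((integrableOn_Ioi_mul_inv_pow_quadratic 4 four_pos hb).const_mul _),
    integral_const_mul, integral_const_mul, integral_Ioi_mul_inv_pow_quadratic 3 four_pos hb,
    integral_Ioi_mul_inv_pow_quadratic 4 four_pos hb]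
  field_simp
  norm_num

lemma integral_Ioi_potential_profile {b : ℝ} (hb : 0 < b) :
    ∫ r in Ioi (0 : ℝ), r * (32 * b * ((4 + b * r ^ 2) ^ 6)⁻¹) = 1 / 320 := by
  simp_rw [mul_left_comm _ (32 * b)]
  rw [integral_const_mul, integral_Ioi_mul_inv_pow_quadratic 4 four_pos hb]
  field_simp
  norm_num

/-- The explicit energy computation in the proof of Theorem 4.2: the quadratic form of
the linearized operator `-Δ - e^φ` at the test function `ζ` equals `-π/320`. -/
theorem liouville_energy_value
    (l : ℝ) (hl : 0 < l) (y : EuclideanSpace ℝ (Fin 2))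
    (φ ζ : EuclideanSpace ℝ (Fin 2) → ℝ)
    (hφdef : ∀ x, φ x = Real.log (32 * l ^ 2 * ((4 + l ^ 2 * ‖x - y‖ ^ 2) ^ 2)⁻¹))
    (hζdef : ∀ x, ζ x = ((4 + l ^ 2 * ‖x - y‖ ^ 2) ^ 2)⁻¹) :
    (∫ x, ‖gradient ζ x‖ ^ 2 ∂(volume : Measure (EuclideanSpace ℝ (Fin 2))))
      - (∫ x, Real.exp (φ x) * ζ x ^ 2
          ∂(volume : Measure (EuclideanSpace ℝ (Fin 2))))
      = -(Real.pi / 320) := by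
  have hpotential : ∀ x, Real.exp (φ x) * ζ x ^ 2
      = 32 * l ^ 2 * ((4 + l ^ 2 * ‖x - y‖ ^ 2) ^ 6)⁻¹ := by
    intro x
    rw [hφdef, hζdef, Real.exp_log (by positivity)]
    field_simp
  obtain rfl : ζ = _ := funext hζdef
  simp_rw [norm_gradient_inv_sq_quadratic_sq four_pos (sq_nonneg l), hpotential]
  have hl2 : 0 < l ^ 2 := by positivity
  rw [integral_comp_norm_sub_euclideanSpace_fin_two
      (fun r => 16 * (l ^ 2) ^ 2 * r ^ 2 * ((4 + l ^ 2 * r ^ 2) ^ 6)⁻¹),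
    integral_comp_norm_sub_euclideanSpace_fin_two (fun r => 32 * l ^ 2 * ((4 + l ^ 2 * r ^ 2) ^ 6)⁻¹),
    integral_Ioi_gradient_profile hl2, integral_Ioi_potential_profile hl2]
  ring
end

section
/- Let n > 2 be an integer, p = (n+2)/(n−2), λ > 0 and y ∈ ℝⁿ. Define φ(x) = (λ√(n(n−2))/(λ² + |x−y|²))^{(n−2)/2} and ζ(x) = (λ² + |x−y|²)^{−n/2−1}. Then ζ ∈ H¹(ℝⁿ) and ∫_{ℝⁿ} |∇ζ(x)|² dx − ∫_{ℝⁿ} p·φ(x)^{p−1}·ζ(x)² dx < 0. -/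
/-!
Write `w = λ² + |x - y|²`. Then `|∇ζ|² = (n + 2)² |x - y|² w^(-n-4)` and
`p φ^(p-1) ζ² = n (n + 2) λ² w^(-n-4)`, so in polar coordinates the two integrals are
`C (n + 2)² A` and `C n (n + 2) λ² J` with `C > 0`, `A = ∫₀^∞ r^(n+1) (λ² + r²)^(-n-4) dr` and
`J = ∫₀^∞ r^(n-1) (λ² + r²)^(-n-4) dr`. Integrating `(r^n (λ² + r²)^(-n-3))'` over `(0, ∞)`
gives `n λ² J = (n + 6) A`, hence the quadratic form equals `-4 C (n + 2) A < 0`.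
-/

open MeasureTheory Real Filter Set Topology Module Metric InnerProductSpace

section Radial

variable {E : Type*} [NormedAddCommGroup E] [NormedSpace ℝ E] [FiniteDimensional ℝ E]
  [MeasurableSpace E] [BorelSpace E] (μ : Measure E) [μ.IsAddHaarMeasure]

theorem integrable_norm_pow_mul_add_sq_rpow_neg {a : ℝ} (ha : 0 < a) (m : ℕ) {k : ℝ}
    (hk : (finrank ℝ E : ℝ) + m < 2 * k) :
    Integrable (fun x : E ↦ ‖x‖ ^ m * (a + ‖x‖ ^ 2) ^ (-k)) μ := by
  have hk0 : 0 ≤ k := by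
    linarith [(finrank ℝ E).cast_nonneg (α := ℝ), m.cast_nonneg (α := ℝ)]
  set c := min 1 a / 2
  have hc : 0 < c := by positivity
  have hmeas : Continuous (fun x : E ↦ ‖x‖ ^ m * (a + ‖x‖ ^ 2) ^ (-k)) :=
    (continuous_norm.pow m).mul (.rpow_const (by fun_prop) fun x ↦ .inl (by positivity))
  refine ((integrable_one_add_norm (μ := μ) (r := 2 * k - m) (by linarith)).const_mul
    (c ^ (-k))).mono' hmeas.aestronglyMeasurable (.of_forall fun x ↦ ?_)
  set r := ‖x‖
  have hr : 0 ≤ r := norm_nonneg x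
  -- `a + r² ≥ c (1 + r)²` reduces the decay to that of the Japanese bracket `1 + ‖x‖`
  have hbound : c * (1 + r) ^ 2 ≤ a + r ^ 2 := by
    have h0 : 0 < min 1 a := lt_min one_pos ha
    calc c * (1 + r) ^ 2 ≤ min 1 a * 1 + min 1 a * r ^ 2 := by
          simp only [c]; nlinarith [sq_nonneg (1 - r)]
      _ ≤ a + r ^ 2 := by
          gcongr
          · exact (mul_one _).trans_le (min_le_right _ _)
          · exact mul_le_of_le_one_left (sq_nonneg r) (min_le_left _ _)
  rw [Real.norm_eq_abs, abs_of_nonneg (by positivity)]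
  calc r ^ m * (a + r ^ 2) ^ (-k)
      ≤ (1 + r) ^ (m : ℝ) * (c * (1 + r) ^ 2) ^ (-k) := by
        rw [rpow_natCast]
        exact mul_le_mul (pow_le_pow_left₀ hr (by linarith) m)
          (rpow_le_rpow_of_nonpos (by positivity) hbound (by linarith)) (by positivity)
          (by positivity)
    _ = c ^ (-k) * (1 + r) ^ (-(2 * k - m)) := by
        rw [mul_rpow hc.le (by positivity), ← rpow_natCast (1 + r) 2,
          ← rpow_mul (by positivity), mul_left_comm, ← rpow_add (by positivity)]
        ring_nf

theorem exists_pos_integral_fun_norm_sub_eq [Nontrivial E] (y : E) :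
    ∃ C > 0, ∀ f : ℝ → ℝ,
      ∫ x, f ‖x - y‖ ∂μ = C * ∫ r in Ioi 0, r ^ (finrank ℝ E - 1) * f r := by
  refine ⟨finrank ℝ E * μ.real (ball 0 1), mul_pos (by simp [finrank_pos])
    (ENNReal.toReal_pos (measure_ball_pos μ _ one_pos).ne' measure_ball_lt_top.ne), fun f ↦ ?_⟩
  rw [integral_sub_right_eq_self (fun x ↦ f ‖x‖) y, integral_fun_norm_addHaar]
  simp only [nsmul_eq_mul, smul_eq_mul, mul_assoc]

end Radial

section HalfLine

variable {a : ℝ}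

theorem integrableOn_Ioi_pow_mul_add_sq_rpow_neg (ha : 0 < a) (m : ℕ) {k : ℝ}
    (hk : (m : ℝ) + 1 < 2 * k) :
    IntegrableOn (fun r : ℝ ↦ r ^ m * (a + r ^ 2) ^ (-k)) (Ioi 0) := by
  refine (integrable_norm_pow_mul_add_sq_rpow_neg volume ha m
    (by rwa [finrank_self, Nat.cast_one, add_comm])).integrableOn.congr_fun
    (fun r (hr : 0 < r) ↦ ?_) measurableSet_Ioi
  simp only [norm_of_nonneg hr.le]

theorem integral_Ioi_pow_mul_add_sq_rpow_neg_pos (ha : 0 < a) (m : ℕ) {k : ℝ}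
    (hk : (m : ℝ) + 1 < 2 * k) :
    0 < ∫ r in Ioi (0 : ℝ), r ^ m * (a + r ^ 2) ^ (-k) := by
  have hpos : ∀ r ∈ Ioi (0 : ℝ), 0 < r ^ m * (a + r ^ 2) ^ (-k) := fun r (hr : 0 < r) ↦ by
    positivity
  rw [setIntegral_pos_iff_support_of_nonneg_ae
    ((ae_restrict_mem measurableSet_Ioi).mono fun r hr ↦ (hpos r hr).le)
    (integrableOn_Ioi_pow_mul_add_sq_rpow_neg ha m hk),
    inter_eq_right.2 fun r hr ↦ Function.mem_support.2 (hpos r hr).ne']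
  simp

theorem tendsto_pow_mul_add_sq_rpow_neg_atTop (ha : 0 < a) (m : ℕ) {k : ℝ}
    (hk : (m : ℝ) < 2 * k) :
    Tendsto (fun r : ℝ ↦ r ^ m * (a + r ^ 2) ^ (-k)) atTop (𝓝 0) := by
  have hk0 : 0 ≤ k := by linarith [m.cast_nonneg (α := ℝ)]
  refine squeeze_zero' ((eventually_ge_atTop 0).mono fun r hr ↦ by positivity) ?_
    (tendsto_rpow_neg_atTop (y := 2 * k - m) (by linarith))
  filter_upwards [eventually_gt_atTop 0] with r hr
  calc r ^ m * (a + r ^ 2) ^ (-k) ≤ r ^ m * (r ^ 2) ^ (-k) := by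
        refine mul_le_mul_of_nonneg_left ?_ (by positivity)
        exact rpow_le_rpow_of_nonpos (by positivity) (by linarith) (by linarith)
    _ = r ^ (-(2 * k - m)) := by
        rw [← rpow_natCast, ← rpow_natCast r 2, ← rpow_mul hr.le, ← rpow_add hr]
        ring_nf

theorem hasDerivAt_pow_mul_add_sq_rpow_neg (ha : 0 < a) (m : ℕ) (k r : ℝ) :
    HasDerivAt (fun r : ℝ ↦ r ^ (m + 1) * (a + r ^ 2) ^ (-k))
      ((m + 1) * (r ^ m * (a + r ^ 2) ^ (-k)) -
        2 * k * (r ^ (m + 2) * (a + r ^ 2) ^ (-(k + 1)))) r := by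
  have h := (hasDerivAt_pow (m + 1) r).mul (((hasDerivAt_pow 2 r).const_add a).rpow_const
    (p := -k) (.inl (by positivity : a + r ^ 2 > 0).ne'))
  refine h.congr_deriv ?_
  rw [show -k - 1 = -(k + 1) by ring]
  push_cast
  ring

theorem integral_Ioi_pow_mul_add_sq_rpow_neg_eq (ha : 0 < a) (m : ℕ) {k : ℝ}
    (hk : (m : ℝ) + 1 < 2 * k) :
    (m + 1) * ∫ r in Ioi (0 : ℝ), r ^ m * (a + r ^ 2) ^ (-k) =
      2 * k * ∫ r in Ioi (0 : ℝ), r ^ (m + 2) * (a + r ^ 2) ^ (-(k + 1)) := by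
  have h₁ := (integrableOn_Ioi_pow_mul_add_sq_rpow_neg ha m hk).const_mul (m + 1)
  have h₂ := (integrableOn_Ioi_pow_mul_add_sq_rpow_neg ha (m + 2) (k := k + 1)
    (by push_cast; linarith)).const_mul (2 * k)
  have hibp := integral_Ioi_of_hasDerivAt_of_tendsto'
    (fun r _ ↦ hasDerivAt_pow_mul_add_sq_rpow_neg ha m k r) (h₁.sub h₂)
    (tendsto_pow_mul_add_sq_rpow_neg_atTop ha (m + 1) (by push_cast; linarith))
  rw [integral_sub h₁ h₂, integral_const_mul, integral_const_mul] at hibp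
  simpa [sub_eq_zero] using hibp

theorem integral_Ioi_pow_mul_add_sq_rpow_neg_recurrence (ha : 0 < a) (m : ℕ) {k : ℝ}
    (hk : (m : ℝ) + 3 < 2 * k) :
    (m + 1) * a * ∫ r in Ioi (0 : ℝ), r ^ m * (a + r ^ 2) ^ (-k) =
      (2 * k - m - 3) * ∫ r in Ioi (0 : ℝ), r ^ (m + 2) * (a + r ^ 2) ^ (-k) := by
  have h₁ := integrableOn_Ioi_pow_mul_add_sq_rpow_neg ha m (k := k) (by linarith)
  have h₂ := integrableOn_Ioi_pow_mul_add_sq_rpow_neg ha (m + 2) (k := k) (by push_cast; linarith)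
  have hsplit : ∫ r in Ioi (0 : ℝ), r ^ m * (a + r ^ 2) ^ (-(k - 1)) =
      a * (∫ r in Ioi (0 : ℝ), r ^ m * (a + r ^ 2) ^ (-k)) +
        ∫ r in Ioi (0 : ℝ), r ^ (m + 2) * (a + r ^ 2) ^ (-k) := by
    rw [← integral_const_mul, ← integral_add (h₁.const_mul a) h₂]
    refine integral_congr_ae (.of_forall fun r ↦ ?_)
    dsimp only
    rw [show -(k - 1) = -k + 1 by ring, rpow_add_one (by positivity : a + r ^ 2 > 0).ne']
    ring
  have hibp := integral_Ioi_pow_mul_add_sq_rpow_neg_eq ha m (k := k - 1) (by linarith)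
  rw [sub_add_cancel, hsplit] at hibp
  linear_combination hibp

end HalfLine

section Bubble

variable {E : Type*} [NormedAddCommGroup E] [InnerProductSpace ℝ E] {a : ℝ}

theorem hasGradientAt_add_norm_sub_sq_rpow [CompleteSpace E] (ha : 0 < a) (s : ℝ) (y x : E) :
    HasGradientAt (fun x ↦ (a + ‖x - y‖ ^ 2) ^ s)
      ((2 * s * (a + ‖x - y‖ ^ 2) ^ (s - 1)) • (x - y)) x := by
  have h := (((hasDerivAt_id (‖x - y‖ ^ 2)).const_add a).rpow_const (p := s)
    (.inl (by positivity : a + ‖x - y‖ ^ 2 > 0).ne')).comp_hasFDerivAt x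
    ((hasFDerivAt_id x).sub_const y).norm_sq
  rw [hasGradientAt_iff_hasFDerivAt]
  refine h.congr_fderiv ?_
  ext z
  simp only [one_mul, id_eq, map_sub, ContinuousLinearMap.comp_id, smul_apply,
    sub_apply, coe_innerSL_apply, nsmul_eq_mul, Nat.cast_ofNat, smul_eq_mul,
    map_smul, toDual_apply_apply]
  ring

theorem norm_gradient_add_norm_sub_sq_rpow_sq [CompleteSpace E] (ha : 0 < a) (s : ℝ)
    (y x : E) :
    ‖gradient (fun x ↦ (a + ‖x - y‖ ^ 2) ^ s) x‖ ^ 2 =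
      (2 * s) ^ 2 * (‖x - y‖ ^ 2 * (a + ‖x - y‖ ^ 2) ^ (2 * (s - 1))) := by
  rw [(hasGradientAt_add_norm_sub_sq_rpow ha s y x).gradient, norm_smul, mul_pow, norm_mul,
    norm_mul, Real.norm_eq_abs, Real.norm_eq_abs, Real.norm_eq_abs, mul_pow, mul_pow, sq_abs,
    sq_abs, sq_abs, mul_comm 2 (s - 1), rpow_mul (by positivity), rpow_two]
  ring

variable [FiniteDimensional ℝ E] [MeasurableSpace E] [BorelSpace E] (μ : Measure E)
  [μ.IsAddHaarMeasure]

theorem memLp_two_add_norm_sub_sq_rpow (ha : 0 < a) (y : E) {s : ℝ}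
    (hs : (finrank ℝ E : ℝ) < -4 * s) :
    MemLp (fun x ↦ (a + ‖x - y‖ ^ 2) ^ s) 2 μ := by
  refine (memLp_two_iff_integrable_sq (Continuous.aestronglyMeasurable
    (.rpow_const (by fun_prop) fun x ↦ .inl (by positivity)))).2 ?_
  have h := (integrable_norm_pow_mul_add_sq_rpow_neg μ ha 0 (k := -(2 * s))
    (by push_cast; linarith)).comp_sub_right y
  refine h.congr (.of_forall fun x ↦ ?_)
  dsimp only
  rw [pow_zero, one_mul, neg_neg, mul_comm 2 s, rpow_mul (by positivity), rpow_two]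

theorem memLp_two_gradient_add_norm_sub_sq_rpow (ha : 0 < a) (y : E) {s : ℝ}
    (hs : (finrank ℝ E : ℝ) + 2 < -4 * (s - 1)) :
    MemLp (gradient fun x ↦ (a + ‖x - y‖ ^ 2) ^ s) 2 μ := by
  have hgrad := funext fun x ↦ (hasGradientAt_add_norm_sub_sq_rpow ha s y x).gradient
  refine (memLp_two_iff_integrable_sq_norm ?_).2 ?_
  · rw [hgrad]
    exact Continuous.aestronglyMeasurable (.smul (continuous_const.mul
      (.rpow_const (by fun_prop) fun x ↦ .inl (by positivity))) (by fun_prop))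
  have h := ((integrable_norm_pow_mul_add_sq_rpow_neg μ ha 2 (k := -(2 * (s - 1)))
    (by push_cast; linarith)).comp_sub_right y).const_mul ((2 * s) ^ 2)
  refine h.congr (.of_forall fun x ↦ ?_)
  simp only [norm_gradient_add_norm_sub_sq_rpow_sq ha, neg_neg]

end Bubble

theorem critical_potential_mul_sq {n : ℝ} (hn : 2 < n) {lam : ℝ} (hlam : 0 < lam) (r : ℝ) :
    (n + 2) / (n - 2) *
        ((lam * √(n * (n - 2)) / (lam ^ 2 + r ^ 2)) ^ ((n - 2) / 2)) ^ ((n + 2) / (n - 2) - 1) *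
        ((lam ^ 2 + r ^ 2) ^ (-n / 2 - 1)) ^ 2 =
      n * (n + 2) * lam ^ 2 * (lam ^ 2 + r ^ 2) ^ (-(n + 4)) := by
  have hn2 : n - 2 ≠ 0 := by linarith
  have hw : 0 < lam ^ 2 + r ^ 2 := by positivity
  rw [← rpow_mul (by positivity), show (n - 2) / 2 * ((n + 2) / (n - 2) - 1) = (2 : ℕ) by
      field_simp; ring, rpow_natCast, div_pow, mul_pow, sq_sqrt (by nlinarith),
    ← rpow_mul_natCast hw.le,
    show (-n / 2 - 1) * (2 : ℕ) = -(n + 4) + (2 : ℕ) by push_cast; ring, rpow_add hw, rpow_natCast]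
  field_simp

/-- The critical-case computation in Lemma 5.3: for the Aubin–Talenti steady states
`φ` of `-Δφ = φ^p` with `p = (n+2)/(n-2)`, the quadratic form of the linearized
operator `-Δ - pφ^{p-1}` is negative at the explicit test function `ζ ∈ H¹`. -/
theorem critical_negative_energy
    (n : ℕ) (hn : 2 < n)
    (p : ℝ) (hp : p = ((n : ℝ) + 2) / ((n : ℝ) - 2))
    (lam : ℝ) (hlam : 0 < lam) (y : EuclideanSpace ℝ (Fin n))
    (φ ζ : EuclideanSpace ℝ (Fin n) → ℝ)
    (hφdef : ∀ x, φ x =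
      (lam * Real.sqrt ((n : ℝ) * ((n : ℝ) - 2)) / (lam ^ 2 + ‖x - y‖ ^ 2))
        ^ (((n : ℝ) - 2) / 2))
    (hζdef : ∀ x, ζ x = (lam ^ 2 + ‖x - y‖ ^ 2) ^ (-(n : ℝ) / 2 - 1)) :
    MemLp ζ 2 (volume : Measure (EuclideanSpace ℝ (Fin n))) ∧
    MemLp (gradient ζ) 2 (volume : Measure (EuclideanSpace ℝ (Fin n))) ∧
    (∫ x, ‖gradient ζ x‖ ^ 2 ∂(volume : Measure (EuclideanSpace ℝ (Fin n))))
      - (∫ x, p * φ x ^ (p - 1) * ζ x ^ 2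
          ∂(volume : Measure (EuclideanSpace ℝ (Fin n)))) < 0 := by
  have : Nonempty (Fin n) := ⟨⟨0, by omega⟩⟩
  have hn' : (2 : ℝ) < n := by exact_mod_cast hn
  have hlam2 : 0 < lam ^ 2 := by positivity
  obtain rfl : ζ = fun x ↦ (lam ^ 2 + ‖x - y‖ ^ 2) ^ (-(n : ℝ) / 2 - 1) := funext hζdef
  refine ⟨memLp_two_add_norm_sub_sq_rpow volume hlam2 y ?_,
    memLp_two_gradient_add_norm_sub_sq_rpow volume hlam2 y ?_, ?_⟩
  · simp only [finrank_euclideanSpace_fin]; linarith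
  · simp only [finrank_euclideanSpace_fin]; linarith
  obtain ⟨C, hC, hradial⟩ := exists_pos_integral_fun_norm_sub_eq volume y
  have hkin := hradial fun r ↦
    (2 * (-(n : ℝ) / 2 - 1)) ^ 2 * (r ^ 2 * (lam ^ 2 + r ^ 2) ^ (-((n : ℝ) + 4)))
  have hpot := hradial fun r ↦ n * (n + 2) * lam ^ 2 * (lam ^ 2 + r ^ 2) ^ (-((n : ℝ) + 4))
  simp only [finrank_euclideanSpace_fin] at hkin hpot
  simp_rw [norm_gradient_add_norm_sub_sq_rpow_sq hlam2,
    show 2 * (-(n : ℝ) / 2 - 1 - 1) = -(n + 4) by ring, hp, hφdef,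
    critical_potential_mul_sq hn' hlam, hkin, hpot, mul_left_comm (_ ^ (n - 1)),
    integral_const_mul, ← mul_assoc, ← pow_add, add_comm 2]
  have hrec := integral_Ioi_pow_mul_add_sq_rpow_neg_recurrence hlam2 (n - 1) (k := n + 4)
    (by rw [Nat.cast_sub (by omega)]; push_cast; linarith)
  have hA := integral_Ioi_pow_mul_add_sq_rpow_neg_pos hlam2 (n - 1 + 2) (k := n + 4)
    (by rw [Nat.cast_add, Nat.cast_sub (by omega)]; push_cast; linarith)
  push_cast [Nat.cast_sub (by omega : 1 ≤ n)] at hrec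
  have hn2 : (0 : ℝ) < n + 2 := by positivity
  linear_combination (-C * (n + 2)) * hrec + 4 * mul_pos (mul_pos hC hn2) hA
end

section
/- Let n > 2 be an integer, p > (n+2)/(n−2), and let Q(α) = α(n−2−α). Assume ((n−2)/2)² ≥ p·Q(2/(p−1)). Let φ ∈ C²(ℝⁿ) be positive, radially symmetric (φ(x) = g(|x|) for some function g), satisfy −Δφ = φ^p on ℝⁿ, and satisfy lim_{|x|→∞} |x|²·φ(x)^{p−1} = Q(2/(p−1)). Then |x|²·φ(x)^{p−1} ≤ Q(2/(p−1)) for every x ∈ ℝⁿ. -/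
/-!
In the Emden–Fowler variable `v(s) = e^{α s} g(e^s)`, `α = 2/(p-1)`, the radial equation becomes
the damped autonomous equation `v'' + β v' = Q v - v^p` with `β = N - 2 - 2α > 0`; the profile is
its equilibrium `L = Q^{1/(p-1)}`, and `v → 0` as `s → -∞` because `g` is bounded at the origin.
If `v` reached `L`, then at the first such point `s₁` the function `w = e^{β s/2} (v - L)` would
be concave on `(-∞, s₁]`: the stability condition, read as `(p-1) Q ≤ (β/2)²`, lets the linear
term `(β/2)² (v - L)` dominate `Q v - v^p` below `L`, by the tangent-line bound for `t ↦ t^p`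
at `L`. A concave function tending to `0` at `-∞` and nonnegative at `s₁` is nonnegative on
`(-∞, s₁]`, whereas `w < 0` there.
-/

open MeasureTheory Real Filter

/-- The Laplacian of `u : ℝⁿ → ℝ`, as the sum of the second partial derivatives
in the coordinate directions. -/
noncomputable def lap {n : ℕ} (u : EuclideanSpace ℝ (Fin n) → ℝ)
    (x : EuclideanSpace ℝ (Fin n)) : ℝ :=
  ∑ i : Fin n,
    fderiv ℝ (fun y => fderiv ℝ u y (EuclideanSpace.single i 1)) x (EuclideanSpace.single i 1)

open Set Topology

theorem fderiv_fderiv_apply_eq_deriv_deriv {E F : Type*} [NormedAddCommGroup E]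
    [NormedSpace ℝ E] [NormedAddCommGroup F] [NormedSpace ℝ F] {φ : E → F}
    (hφ : ContDiff ℝ 2 φ) (x v : E) :
    fderiv ℝ (fun y => fderiv ℝ φ y v) x v = deriv (deriv fun t : ℝ => φ (x + t • v)) 0 := by
  have hline : deriv (fun t : ℝ => φ (x + t • v)) = fun t => fderiv ℝ φ (x + t • v) v := by
    funext t
    have hx : HasDerivAt (fun t : ℝ => x + t • v) v t := by
      simpa using ((hasDerivAt_id t).smul_const v).const_add x
    exact ((hφ.differentiable two_ne_zero _).hasFDerivAt.comp_hasDerivAt t hx).deriv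
  have hψ : Differentiable ℝ fun y => fderiv ℝ φ y v :=
    ((hφ.fderiv_right le_rfl).differentiable one_ne_zero).clm_apply (differentiable_const v)
  rw [hline]
  exact (hψ x).lineDeriv_eq_fderiv.symm

theorem deriv_deriv_comp_const_add (g : ℝ → ℝ) (r : ℝ) :
    deriv (deriv fun t : ℝ => g (r + t)) 0 = deriv (deriv g) r := by
  have h : deriv (fun t : ℝ => g (r + t)) = fun t => deriv g (r + t) :=
    funext fun t => deriv_comp_const_add g r t
  rw [h, deriv_comp_const_add, add_zero]

theorem deriv_deriv_comp_sqrt_sq_add_sq {g : ℝ → ℝ} (hg : Differentiable ℝ g)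
    {r : ℝ} (hg' : DifferentiableAt ℝ (deriv g) r) (hr : 0 < r) :
    deriv (deriv fun t : ℝ => g (√(r ^ 2 + t ^ 2))) 0 = deriv g r / r := by
  set ρ : ℝ → ℝ := fun t => √(r ^ 2 + t ^ 2) with hρdef
  have hρ0 : ρ 0 = r := by simp [ρ, Real.sqrt_sq hr.le]
  have hρ : ∀ t, HasDerivAt ρ (t / ρ t) t := by
    intro t
    have hq : HasDerivAt (fun t : ℝ => r ^ 2 + t ^ 2) (2 * t) t := by
      simpa using (hasDerivAt_pow 2 t).const_add (r ^ 2)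
    refine ((Real.hasDerivAt_sqrt (by positivity)).comp t hq).congr_deriv ?_
    rw [hρdef]
    field_simp
  have hfirst : deriv (fun t => g (ρ t)) = fun t => deriv g (ρ t) * (t / ρ t) :=
    funext fun t => ((hg (ρ t)).hasDerivAt.comp t (hρ t)).deriv
  have hsecond : HasDerivAt (fun t => deriv g (ρ t) * (t / ρ t)) (deriv g r / r) 0 :=
    (((hρ0 ▸ hg').hasDerivAt.comp 0 (hρ 0)).mul
      ((hasDerivAt_id 0).div (hρ 0) (hρ0 ▸ hr).ne')).congr_deriv (by simp [hρ0]; field_simp)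
  rw [hfirst, hsecond.deriv]

theorem EuclideanSpace.norm_smul_single_add_smul_single {n : ℕ} {i j : Fin n} (hij : i ≠ j)
    (r t : ℝ) :
    ‖r • EuclideanSpace.single i (1 : ℝ) + t • EuclideanSpace.single j (1 : ℝ)‖
      = √(r ^ 2 + t ^ 2) := by
  rw [← Real.sqrt_sq (norm_nonneg _), norm_add_sq_real, norm_smul, norm_smul,
    real_inner_smul_left, real_inner_smul_right]
  simp [EuclideanSpace.inner_single_left, hij]

theorem lap_smul_single_eq {n : ℕ} {φ : EuclideanSpace ℝ (Fin n) → ℝ} (hφ : ContDiff ℝ 2 φ)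
    {g : ℝ → ℝ} (i : Fin n) (hprofile : ∀ t, φ (t • EuclideanSpace.single i 1) = g t)
    (hrad : ∀ x, φ x = g ‖x‖) {r : ℝ} (hr : 0 < r) :
    lap φ (r • EuclideanSpace.single i 1)
      = deriv (deriv g) r + ((n : ℝ) - 1) * (deriv g r / r) := by
  have hg : ContDiff ℝ 2 g := funext hprofile ▸ hφ.comp (contDiff_id.smul contDiff_const)
  have hterm : ∀ j, fderiv ℝ (fun y => fderiv ℝ φ y (EuclideanSpace.single j 1))
      (r • EuclideanSpace.single i 1) (EuclideanSpace.single j 1)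
      = if j = i then deriv (deriv g) r else deriv g r / r := by
    intro j
    rw [fderiv_fderiv_apply_eq_deriv_deriv hφ]
    split_ifs with hji
    · subst hji
      simp_rw [← add_smul, hprofile]
      exact deriv_deriv_comp_const_add g r
    · simp_rw [hrad, EuclideanSpace.norm_smul_single_add_smul_single (Ne.symm hji)]
      exact deriv_deriv_comp_sqrt_sq_add_sq (hg.differentiable two_ne_zero)
        (hg.differentiable_deriv_two r) hr
  rw [lap, Finset.sum_congr rfl fun j _ => hterm j, Finset.sum_ite, Finset.filter_eq',
    Finset.filter_ne']
  simp [Finset.card_erase_of_mem, Nat.cast_sub i.pos]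

noncomputable def emdenFowler (α : ℝ) (g : ℝ → ℝ) (s : ℝ) : ℝ := exp (α * s) * g (exp s)

theorem hasDerivAt_emdenFowler {g : ℝ → ℝ} (α : ℝ) {s : ℝ} (hg : DifferentiableAt ℝ g (exp s)) :
    HasDerivAt (emdenFowler α g) (α * emdenFowler α g s + emdenFowler (α + 1) (deriv g) s) s := by
  have h := ((hasDerivAt_id s).const_mul α).exp.mul (hg.hasDerivAt.comp s (hasDerivAt_exp s))
  refine h.congr_deriv ?_
  simp only [emdenFowler, id, Function.comp_apply, add_mul, one_mul, exp_add]
  ring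

theorem emdenFowler_rpow {g : ℝ → ℝ} {α p s : ℝ} (hα : α * (p - 1) = 2)
    (hg : 0 ≤ g (exp s)) :
    emdenFowler α g s ^ p = emdenFowler (α + 2) (fun r => g r ^ p) s := by
  rw [emdenFowler, emdenFowler, mul_rpow (exp_pos _).le hg, ← exp_mul]
  congr 2
  linear_combination s * hα

theorem emdenFowler_log_rpow {g : ℝ → ℝ} {α p r : ℝ} (hα : α * (p - 1) = 2) (hr : 0 < r)
    (hg : 0 ≤ g r) : emdenFowler α g (log r) ^ (p - 1) = r ^ 2 * g r ^ (p - 1) := by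
  have hexponent : α * log r * (p - 1) = log r * 2 := by linear_combination log r * hα
  rw [emdenFowler, exp_log hr, mul_rpow (exp_pos _).le hg, ← exp_mul, hexponent, exp_mul,
    exp_log hr]
  norm_cast

theorem hasDerivAt_deriv_emdenFowler {N p α : ℝ} {g : ℝ → ℝ} (hα : α * (p - 1) = 2)
    (hg : Differentiable ℝ g) (hg' : Differentiable ℝ (deriv g))
    (hnonneg : ∀ r, 0 < r → 0 ≤ g r)
    (hode : ∀ r, 0 < r → deriv (deriv g) r + (N - 1) * (deriv g r / r) = -g r ^ p) (s : ℝ) :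
    HasDerivAt (fun s => α * emdenFowler α g s + emdenFowler (α + 1) (deriv g) s)
      (-(N - 2 - 2 * α) * (α * emdenFowler α g s + emdenFowler (α + 1) (deriv g) s)
        + α * (N - 2 - α) * emdenFowler α g s - emdenFowler α g s ^ p) s := by
  have h := ((hasDerivAt_emdenFowler α (hg (exp s))).const_mul α).add
    (hasDerivAt_emdenFowler (α + 1) (hg' (exp s)))
  refine h.congr_deriv ?_
  have hg'' : deriv (deriv g) (exp s) = -g (exp s) ^ p - (N - 1) * (deriv g (exp s) / exp s) := by
    linarith [hode _ (exp_pos s)]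
  rw [emdenFowler_rpow hα (hnonneg _ (exp_pos s))]
  simp only [emdenFowler, hg'', add_mul, one_mul, exp_add, show (2 : ℝ) * s = s + s by ring]
  field_simp
  ring

theorem mul_sub_rpow_le_mul_sub {L t p c : ℝ} (hL : 0 < L) (ht : 0 ≤ t) (htL : t ≤ L)
    (hp : 1 ≤ p) (hc : (p - 1) * L ^ (p - 1) ≤ c) :
    L ^ (p - 1) * t - t ^ p ≤ c * (L - t) := by
  have hbernoulli : 1 + p * (t / L - 1) ≤ (t / L) ^ p := by
    simpa using one_add_mul_self_le_rpow_one_add (s := t / L - 1)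
      (by linarith [div_nonneg ht hL.le]) hp
  have hLp : L ^ p = L ^ (p - 1) * L := by
    rw [← rpow_add_one hL.ne', sub_add_cancel]
  have htangent : L ^ (p - 1) * (L + p * (t - L)) ≤ t ^ p := by
    have := mul_le_mul_of_nonneg_right hbernoulli (rpow_nonneg hL.le p)
    rw [div_rpow ht hL.le, div_mul_cancel₀ _ (rpow_pos_of_pos hL p).ne', hLp] at this
    refine le_of_eq_of_le ?_ this
    field_simp
  nlinarith [mul_le_mul_of_nonneg_right hc (sub_nonneg.2 htL)]

theorem ConcaveOn.nonneg_of_tendsto_atBot {w : ℝ → ℝ} {b s : ℝ} (hw : ConcaveOn ℝ (Iic b) w)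
    (hlim : Tendsto w atBot (𝓝 0)) (hb : 0 ≤ w b) (hs : s ≤ b) : 0 ≤ w s := by
  have hmin : Tendsto (fun t => min (w t) (w b)) atBot (𝓝 0) := by
    simpa [min_eq_left hb] using hlim.min (tendsto_const_nhds (x := w b))
  refine le_of_tendsto hmin ?_
  filter_upwards [eventually_le_atBot s] with t ht
  exact hw.ge_on_segment (ht.trans hs) self_mem_Iic
    (by rw [segment_eq_Icc (ht.trans hs)]; exact ⟨ht, hs⟩)

theorem Continuous.exists_le_forall_lt {f : ℝ → ℝ} {c s₀ : ℝ} (hf : Continuous f)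
    (hlow : ∀ᶠ s in atBot, f s < c) (hs₀ : c ≤ f s₀) :
    ∃ s₁, c ≤ f s₁ ∧ ∀ s < s₁, f s < c := by
  obtain ⟨a, ha⟩ := eventually_atBot.1 hlow
  set S := {s | c ≤ f s}
  have hS : BddBelow S := ⟨a, fun s hs => le_of_not_gt fun hsa => (ha s hsa.le).not_ge hs⟩
  refine ⟨sInf S, (isClosed_le continuous_const hf).csInf_mem ⟨s₀, hs₀⟩ hS, fun s hs => ?_⟩
  exact lt_of_not_ge fun hcs => (csInf_le hS hcs).not_gt hs

theorem le_of_tendsto_atBot_of_damped_supersolution {v v' v'' : ℝ → ℝ} {β L ℓ : ℝ}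
    (hβ : 0 < β) (hv : ∀ s, HasDerivAt v (v' s) s) (hv' : ∀ s, HasDerivAt v' (v'' s) s)
    (hlim : Tendsto v atBot (𝓝 ℓ)) (hℓ : ℓ < L)
    (hsuper : ∀ s, v s < L → v'' s + β * v' s + (β / 2) ^ 2 * (v s - L) ≤ 0) (s : ℝ) :
    v s ≤ L := by
  by_contra! hs
  have hvc : Continuous v := continuous_iff_continuousAt.2 fun s => (hv s).continuousAt
  obtain ⟨s₁, hs₁, hbelow⟩ :=
    hvc.exists_le_forall_lt (hlim.eventually (gt_mem_nhds hℓ)) hs.le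
  set c := β / 2
  set w : ℝ → ℝ := fun s => exp (c * s) * (v s - L)
  have hexp : ∀ s, HasDerivAt (fun s => exp (c * s)) (c * exp (c * s)) s := fun s => by
    simpa [mul_comm] using ((hasDerivAt_id s).const_mul c).exp
  have hw : ∀ s, HasDerivAt w (exp (c * s) * (c * (v s - L) + v' s)) s := fun s =>
    ((hexp s).mul ((hv s).sub_const L)).congr_deriv (by ring)
  have hw' : ∀ s, HasDerivAt (fun s => exp (c * s) * (c * (v s - L) + v' s))
      (exp (c * s) * (v'' s + β * v' s + c ^ 2 * (v s - L))) s := fun s =>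
    ((hexp s).mul (((hv s).sub_const L).const_mul c |>.add (hv' s))).congr_deriv
      (by simp only [c, Pi.add_apply]; ring)
  have hconcave : ConcaveOn ℝ (Iic s₁) w := by
    refine concaveOn_of_hasDerivWithinAt2_nonpos (convex_Iic s₁)
      (continuous_iff_continuousAt.2 fun s => (hw s).continuousAt).continuousOn
      (fun s _ => (hw s).hasDerivWithinAt) (fun s _ => (hw' s).hasDerivWithinAt) ?_
    intro s hs
    rw [interior_Iic] at hs
    exact mul_nonpos_of_nonneg_of_nonpos (exp_pos _).le (hsuper s (hbelow s hs))
  have hwlim : Tendsto w atBot (𝓝 0) := by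
    have hexp0 : Tendsto (fun s => exp (c * s)) atBot (𝓝 0) :=
      tendsto_exp_atBot.comp (tendsto_id.const_mul_atBot (by positivity))
    simpa using hexp0.mul (hlim.sub_const L)
  have hw₁ : 0 ≤ w s₁ := mul_nonneg (exp_pos _).le (sub_nonneg.2 hs₁)
  have hwneg : w (s₁ - 1) < 0 :=
    mul_neg_of_pos_of_neg (exp_pos _) (sub_neg.2 (hbelow _ (sub_one_lt s₁)))
  exact hwneg.not_ge (hconcave.nonneg_of_tendsto_atBot hwlim hw₁ (sub_one_lt s₁).le)

theorem emdenFowler_le_of_lane_emden {N p α L : ℝ} {g : ℝ → ℝ} (hp : 1 < p)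
    (hα : α * (p - 1) = 2) (hβ : 0 < N - 2 - 2 * α) (hL : 0 < L)
    (hLQ : L ^ (p - 1) = α * (N - 2 - α))
    (hstab : (p - 1) * L ^ (p - 1) ≤ ((N - 2 - 2 * α) / 2) ^ 2)
    (hg : ContDiff ℝ 2 g) (hnonneg : ∀ r, 0 < r → 0 ≤ g r)
    (hode : ∀ r, 0 < r → deriv (deriv g) r + (N - 1) * (deriv g r / r) = -g r ^ p) (s : ℝ) :
    emdenFowler α g s ≤ L := by
  have hαpos : 0 < α := by nlinarith
  have hg₁ : Differentiable ℝ g := hg.differentiable two_ne_zero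
  have hlim : Tendsto (emdenFowler α g) atBot (𝓝 0) := by
    have hexp : Tendsto (fun s => exp (α * s)) atBot (𝓝 0) :=
      tendsto_exp_atBot.comp (tendsto_id.const_mul_atBot hαpos)
    show Tendsto (fun s => exp (α * s) * g (exp s)) atBot (𝓝 0)
    simpa using hexp.mul ((hg.continuous.tendsto 0).comp tendsto_exp_atBot)
  refine le_of_tendsto_atBot_of_damped_supersolution hβ
    (fun s => hasDerivAt_emdenFowler α (hg₁ _))
    (hasDerivAt_deriv_emdenFowler hα hg₁ hg.differentiable_deriv_two hnonneg hode) hlim hL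
    (fun s hs => ?_) s
  have hv : 0 ≤ emdenFowler α g s := mul_nonneg (exp_pos _).le (hnonneg _ (exp_pos s))
  have := mul_sub_rpow_le_mul_sub hL hv hs.le hp.le hstab
  rw [hLQ] at this
  linarith

theorem sq_mul_rpow_le_of_radial_lane_emden {N p : ℝ} (hN : 2 < N) (hp : (N + 2) / (N - 2) < p)
    (hstab : p * (2 / (p - 1) * (N - 2 - 2 / (p - 1))) ≤ ((N - 2) / 2) ^ 2)
    {g : ℝ → ℝ} (hg : ContDiff ℝ 2 g) (hnonneg : ∀ r, 0 < r → 0 ≤ g r)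
    (hode : ∀ r, 0 < r → deriv (deriv g) r + (N - 1) * (deriv g r / r) = -g r ^ p)
    {r : ℝ} (hr : 0 ≤ r) : r ^ 2 * g r ^ (p - 1) ≤ 2 / (p - 1) * (N - 2 - 2 / (p - 1)) := by
  set α := 2 / (p - 1)
  have hp' : N + 2 < p * (N - 2) := (div_lt_iff₀ (by linarith)).1 hp
  have hp1 : 1 < p := by nlinarith
  have hα : α * (p - 1) = 2 := div_mul_cancel₀ _ (by linarith)
  have hβ : 0 < N - 2 - 2 * α := by
    have : 2 * α < N - 2 := by
      rw [show 2 * α = 4 / (p - 1) by ring, div_lt_iff₀ (by linarith)]; nlinarith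
    linarith
  have hQ : 0 < α * (N - 2 - α) := mul_pos (by positivity) (by linarith)
  rcases hr.eq_or_lt with rfl | hr
  · simpa using hQ.le
  set L := (α * (N - 2 - α)) ^ (1 / (p - 1))
  have hLQ : L ^ (p - 1) = α * (N - 2 - α) := by
    rw [← rpow_mul hQ.le, one_div_mul_cancel (by linarith), rpow_one]
  -- `((N - 2) / 2) ^ 2 - ((N - 2 - 2 α) / 2) ^ 2 = α (N - 2 - α)`, so this is `hstab`.
  have hstab' : (p - 1) * L ^ (p - 1) ≤ ((N - 2 - 2 * α) / 2) ^ 2 := by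
    rw [hLQ]; nlinarith
  have hvL := emdenFowler_le_of_lane_emden hp1 hα hβ (rpow_pos_of_pos hQ _) hLQ hstab' hg
    hnonneg hode (log r)
  rw [← emdenFowler_log_rpow hα hr (hnonneg r hr), ← hLQ]
  exact rpow_le_rpow (mul_nonneg (exp_pos _).le (hnonneg _ (exp_pos _))) hvL (by linarith)

theorem pointwise_bound_below_asymptotic_profile_general
    (n : ℕ) (hn : 2 < n)
    (p : ℝ) (hp : ((n : ℝ) + 2) / ((n : ℝ) - 2) < p)
    (Q : ℝ → ℝ) (hQ : ∀ α, Q α = α * ((n : ℝ) - 2 - α))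
    (hstab : p * Q (2 / (p - 1)) ≤ (((n : ℝ) - 2) / 2) ^ 2)
    (φ : EuclideanSpace ℝ (Fin n) → ℝ) (hφ : ContDiff ℝ 2 φ)
    (hφpos : ∀ x, 0 < φ x)
    (hrad : ∃ g : ℝ → ℝ, ∀ x, φ x = g ‖x‖)
    (hpde : ∀ x, -lap φ x = φ x ^ p) :
    ∀ x : EuclideanSpace ℝ (Fin n), ‖x‖ ^ 2 * φ x ^ (p - 1) ≤ Q (2 / (p - 1)) := by
  obtain ⟨g₀, hg₀⟩ := hrad
  let i : Fin n := ⟨0, by omega⟩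
  set g : ℝ → ℝ := fun t => φ (t • EuclideanSpace.single i 1)
  have hφg : ∀ x, φ x = g ‖x‖ := fun x => by
    simp [g, hg₀ x, hg₀ (_ • _), norm_smul]
  have hode : ∀ r, 0 < r → deriv (deriv g) r + ((n : ℝ) - 1) * (deriv g r / r) = -g r ^ p := by
    intro r hr
    have := hpde (r • EuclideanSpace.single i 1)
    rw [lap_smul_single_eq hφ i (fun _ => rfl) hφg hr] at this
    linarith
  intro x
  rw [hφg x, hQ]
  exact sq_mul_rpow_le_of_radial_lane_emden (by exact_mod_cast hn) hp (hQ _ ▸ hstab)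
    (hφ.comp (contDiff_id.smul contDiff_const)) (fun r _ => (hφpos _).le) hode (norm_nonneg x)

/-- The pointwise bound (5.9) of Lemma 5.4: under the spectral-stability condition
`((n-2)/2)² ≥ p·Q(2/(p-1))`, the radial steady states of the supercritical Lane–Emden
equation lie everywhere below their asymptotic profile. -/
theorem pointwise_bound_below_asymptotic_profile
    (n : ℕ) (hn : 2 < n)
    (p : ℝ) (hp : ((n : ℝ) + 2) / ((n : ℝ) - 2) < p)
    (Q : ℝ → ℝ) (hQ : ∀ α, Q α = α * ((n : ℝ) - 2 - α))
    (hstab : p * Q (2 / (p - 1)) ≤ (((n : ℝ) - 2) / 2) ^ 2)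
    (φ : EuclideanSpace ℝ (Fin n) → ℝ) (hφ : ContDiff ℝ 2 φ)
    (hφpos : ∀ x, 0 < φ x)
    (hrad : ∃ g : ℝ → ℝ, ∀ x, φ x = g ‖x‖)
    (hpde : ∀ x, -lap φ x = φ x ^ p)
    (hasymp : Tendsto (fun x : EuclideanSpace ℝ (Fin n) => ‖x‖ ^ 2 * φ x ^ (p - 1))
      (Filter.cocompact (EuclideanSpace ℝ (Fin n))) (nhds (Q (2 / (p - 1))))) :
    ∀ x : EuclideanSpace ℝ (Fin n), ‖x‖ ^ 2 * φ x ^ (p - 1) ≤ Q (2 / (p - 1)) :=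
  pointwise_bound_below_asymptotic_profile_general n hn p hp Q hQ hstab φ hφ hφpos hrad hpde
end
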